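/- Let A, B, a, b be positive integers with a ≤ A, b ≤ B, and let G = ℤ_A × ℤ_B. If the cube Q_{a,b} = [a] × [b] has a spectrum Λ ⊆ G, then a divides A, b divides B, and Q*_{a,b} + Λ tiles G, where Q*_{a,b} = [A/a] × [B/b] is the dual cube. -/

import Mathlib

/-- The cube `[a] × [b]` in `ℤ_A × ℤ_B`. -/
def cube2 (A B a b : ℕ) : Finset (ZMod A × ZMod B) :=
  Finset.image (fun v : Fin a × Fin b => (((v.1 : ℕ) : ZMod A), ((v.2 : ℕ) : ZMod B)))
    Finset.univ

/-- The character `e_λ(x) = exp(2πi(λ₁x₁/A + λ₂x₂/B))` on `ℤ_A × ℤ_B`. -/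
noncomputable def e2 (A B : ℕ) (lam x : ZMod A × ZMod B) : ℂ :=
  Complex.exp (2 * (Real.pi : ℂ) * Complex.I *
    ((lam.1.val : ℂ) * (x.1.val : ℂ) / (A : ℂ) + (lam.2.val : ℂ) * (x.2.val : ℂ) / (B : ℂ)))

/-- `Λ` is a spectrum of `E ⊆ ℤ_A × ℤ_B`. -/
def IsSpectrum2 (A B : ℕ) (E L : Finset (ZMod A × ZMod B)) : Prop :=
  L.card = E.card ∧
  ∀ l ∈ L, ∀ m ∈ L, l ≠ m →
    ∑ x ∈ E, e2 A B l x * (starRingEnd ℂ) (e2 A B m x) = 0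

/-- `E` tiles the abelian group `G` with translate set `T`. -/
def Tiles {G : Type*} [AddCommGroup G] (E T : Finset G) : Prop :=
  ∀ x : G, ∃! p : G × G, p.1 ∈ E ∧ p.2 ∈ T ∧ x = p.1 + p.2

/-!
For distinct `l, m ∈ Λ` the inner product of `e_l` and `e_m` on `[a] × [b]` is a product of two
geometric sums, so it vanishes only if `l₁ - m₁` is a nonzero `a`-torsion element of `ℤ_A` or
`l₂ - m₂` is a nonzero `b`-torsion element of `ℤ_B`. The coordinates of
`Q = [A / gcd(A, a)] × [B / gcd(B, b)]` are pairwise distinct modulo this torsion, hence the sums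
`q + λ` with `q ∈ Q`, `λ ∈ Λ` are pairwise distinct. Counting gives
`(A / gcd(A, a)) (B / gcd(B, b)) · ab ≤ AB`, which forces `gcd(A, a) = a` and `gcd(B, b) = b`.
Then `Q` is the dual cube, and a packing of `ℤ_A × ℤ_B` with `AB` sums is a tiling.
-/

section Tiling

open Finset

variable {G : Type*} [AddCommGroup G]

theorem card_mul_card_le_of_injOn_add [Fintype G] {E T : Finset G}
    (hinj : Set.InjOn (fun p : G × G => p.1 + p.2) ↑(E ×ˢ T)) :
    #E * #T ≤ Fintype.card G := by
  classical
  rw [← card_product, ← card_image_of_injOn hinj]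
  exact card_le_univ _

theorem tiles_of_injOn_add [Fintype G] {E T : Finset G}
    (hinj : Set.InjOn (fun p : G × G => p.1 + p.2) ↑(E ×ˢ T))
    (hcard : #E * #T = Fintype.card G) : Tiles E T := by
  classical
  have himage : (E ×ˢ T).image (fun p : G × G => p.1 + p.2) = univ := by
    rw [← card_product, ← card_image_of_injOn hinj] at hcard
    exact eq_univ_of_card _ hcard
  intro x
  obtain ⟨p, hp, rfl⟩ := mem_image.1 (himage ▸ mem_univ x)
  refine ⟨p, ⟨(mem_product.1 hp).1, (mem_product.1 hp).2, rfl⟩, ?_⟩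
  rintro q ⟨hq₁, hq₂, hqp⟩
  exact hinj (mem_product.2 ⟨hq₁, hq₂⟩) hp hqp.symm

theorem eq_of_add_eq_add_of_sub_mem (H : AddSubgroup G) {R : Finset G}
    (hR : ∀ x ∈ R, ∀ y ∈ R, x - y ∈ H → x = y) {r r' l m : G} (hr : r ∈ R) (hr' : r' ∈ R)
    (hsum : r + l = r' + m) (hlm : l - m ∈ H) : l = m := by
  have hsub : r - r' = -(l - m) := by rw [neg_sub, sub_eq_sub_iff_add_eq_add, hsum, add_comm]
  rw [hR r hr r' hr' (hsub ▸ H.neg_mem hlm)] at hsum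
  exact add_left_cancel hsum

theorem injOn_add_of_sub_mem {G₁ G₂ : Type*} [AddCommGroup G₁] [AddCommGroup G₂]
    (H₁ : AddSubgroup G₁) (H₂ : AddSubgroup G₂) {R₁ : Finset G₁} {R₂ : Finset G₂}
    {L : Finset (G₁ × G₂)} (hR₁ : ∀ x ∈ R₁, ∀ y ∈ R₁, x - y ∈ H₁ → x = y)
    (hR₂ : ∀ x ∈ R₂, ∀ y ∈ R₂, x - y ∈ H₂ → x = y)
    (hL : ∀ l ∈ L, ∀ m ∈ L, l ≠ m →
      (l.1 - m.1 ∈ H₁ ∧ l.1 ≠ m.1) ∨ (l.2 - m.2 ∈ H₂ ∧ l.2 ≠ m.2)) :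
    Set.InjOn (fun p : (G₁ × G₂) × (G₁ × G₂) => p.1 + p.2) ↑((R₁ ×ˢ R₂) ×ˢ L) := by
  rintro ⟨r, l⟩ hp ⟨r', m⟩ hq (hsum : r + l = r' + m)
  simp only [coe_product, Set.mem_prod, mem_coe] at hp hq
  obtain rfl : l = m := by
    by_contra hne
    rcases hL l hp.2 m hq.2 hne with ⟨hH, hne₁⟩ | ⟨hH, hne₂⟩
    · exact hne₁ (eq_of_add_eq_add_of_sub_mem H₁ hR₁ hp.1.1 hq.1.1 (congrArg Prod.fst hsum) hH)
    · exact hne₂ (eq_of_add_eq_add_of_sub_mem H₂ hR₂ hp.1.2 hq.1.2 (congrArg Prod.snd hsum) hH)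
  simpa using hsum

end Tiling

section Cube

open Finset AddSubgroup ZMod

variable {A B : ℕ}

theorem cube2_eq_product (a b : ℕ) :
    cube2 A B a b = (range a).image (Nat.cast : ℕ → ZMod A) ×ˢ (range b).image Nat.cast := by
  ext ⟨x, y⟩
  simp [cube2, Fin.exists_iff]

theorem injOn_natCast_range {N n : ℕ} (hn : n ≤ N) :
    Set.InjOn (Nat.cast : ℕ → ZMod N) ↑(range n) := fun j hj k hk h =>
  ((natCast_eq_natCast_iff j k N).1 h).eq_of_lt_of_lt
    ((mem_range.1 hj).trans_le hn) ((mem_range.1 hk).trans_le hn)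

theorem card_cube2 {a b : ℕ} (haA : a ≤ A) (hbB : b ≤ B) : #(cube2 A B a b) = a * b := by
  rw [cube2_eq_product, card_product, card_image_of_injOn (injOn_natCast_range haA),
    card_image_of_injOn (injOn_natCast_range hbB), card_range, card_range]

theorem sum_cube2_mul {R : Type*} [CommSemiring R] {a b : ℕ} (haA : a ≤ A) (hbB : b ≤ B)
    (f : ZMod A → R) (g : ZMod B → R) :
    ∑ x ∈ cube2 A B a b, f x.1 * g x.2 = (∑ j ∈ range a, f j) * ∑ k ∈ range b, g k := by
  rw [cube2_eq_product, sum_product, ← sum_mul_sum, sum_image (injOn_natCast_range haA),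
    sum_image (injOn_natCast_range hbB)]

theorem eq_of_sub_mem_torsionBy {N c : ℕ} [NeZero N] {x y : ZMod N}
    (hx : x ∈ (range (N / N.gcd c)).image Nat.cast) (hy : y ∈ (range (N / N.gcd c)).image Nat.cast)
    (h : x - y ∈ torsionBy (ZMod N) c) : x = y := by
  obtain ⟨r, hr, rfl⟩ := mem_image.1 hx
  obtain ⟨r', hr', rfl⟩ := mem_image.1 hy
  rw [torsionBy.nsmul_iff, nsmul_eq_mul, mul_sub, sub_eq_zero, ← Nat.cast_mul, ← Nat.cast_mul,
    natCast_eq_natCast_iff] at h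
  rw [(h.cancel_left_div_gcd (Nat.pos_of_neZero N)).eq_of_lt_of_lt (mem_range.1 hr)
    (mem_range.1 hr')]

variable [NeZero A] [NeZero B]

theorem e2_eq_stdAddChar_mul (l x : ZMod A × ZMod B) :
    e2 A B l x = stdAddChar (l.1 * x.1) * stdAddChar (l.2 * x.2) := by
  have hval {N : ℕ} [NeZero N] (y z : ZMod N) : y * z = ((y.val * z.val : ℕ) : ZMod N) := by
    simp
  rw [e2, hval l.1, hval l.2, stdAddChar_apply, stdAddChar_apply, toCircle_natCast,
    toCircle_natCast, ← Complex.exp_add]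
  push_cast
  ring_nf

theorem sum_cube2_e2_mul_conj {a b : ℕ} (haA : a ≤ A) (hbB : b ≤ B) (l m : ZMod A × ZMod B) :
    ∑ x ∈ cube2 A B a b, e2 A B l x * starRingEnd ℂ (e2 A B m x) =
      (∑ j ∈ range a, stdAddChar (l.1 - m.1) ^ j) * ∑ k ∈ range b, stdAddChar (l.2 - m.2) ^ k := by
  have hterm (x : ZMod A × ZMod B) : e2 A B l x * starRingEnd ℂ (e2 A B m x) =
      stdAddChar ((l.1 - m.1) * x.1) * stdAddChar ((l.2 - m.2) * x.2) := by
    rw [e2_eq_stdAddChar_mul, e2_eq_stdAddChar_mul, map_mul (starRingEnd ℂ),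
      ← AddChar.map_neg_eq_conj, ← AddChar.map_neg_eq_conj, sub_mul, sub_mul, sub_eq_add_neg,
      sub_eq_add_neg, AddChar.map_add_eq_mul, AddChar.map_add_eq_mul]
    ring
  rw [sum_congr rfl fun x _ => hterm x,
    sum_cube2_mul haA hbB (fun y => stdAddChar ((l.1 - m.1) * y))
      (fun y => stdAddChar ((l.2 - m.2) * y))]
  congr 1 <;> refine sum_congr rfl fun j _ => ?_ <;>
    rw [mul_comm, ← nsmul_eq_mul, AddChar.map_nsmul_eq_pow]

theorem pow_eq_one_and_ne_one_of_geom_sum_eq_zero {R : Type*} [Ring R] [CharZero R] {z : R}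
    {n : ℕ} (hn : 0 < n) (h : ∑ j ∈ range n, z ^ j = 0) : z ^ n = 1 ∧ z ≠ 1 := by
  refine ⟨?_, ?_⟩
  · rw [← sub_eq_zero, ← geom_sum_mul, h, zero_mul]
  · rintro rfl
    simp [hn.ne'] at h

theorem mem_torsionBy_of_geom_sum_stdAddChar_eq_zero {N n : ℕ} [NeZero N] (hn : 0 < n)
    {d : ZMod N} (h : ∑ j ∈ range n, stdAddChar d ^ j = 0) :
    d ∈ torsionBy (ZMod N) n ∧ d ≠ 0 := by
  obtain ⟨hpow, hne⟩ := pow_eq_one_and_ne_one_of_geom_sum_eq_zero hn h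
  refine ⟨torsionBy.nsmul_iff.2 (injective_stdAddChar ?_), ?_⟩
  · rw [AddChar.map_nsmul_eq_pow, hpow, AddChar.map_zero_eq_one]
  · rintro rfl
    exact hne (AddChar.map_zero_eq_one _)

/-- The zero set of the Fourier transform of the indicator function of `[a] × [b]`. -/
theorem sub_mem_torsionBy_of_sum_cube2_e2_mul_conj_eq_zero {a b : ℕ} (ha : 0 < a) (hb : 0 < b)
    (haA : a ≤ A) (hbB : b ≤ B) {l m : ZMod A × ZMod B}
    (h : ∑ x ∈ cube2 A B a b, e2 A B l x * starRingEnd ℂ (e2 A B m x) = 0) :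
    (l.1 - m.1 ∈ torsionBy (ZMod A) a ∧ l.1 ≠ m.1) ∨
      (l.2 - m.2 ∈ torsionBy (ZMod B) b ∧ l.2 ≠ m.2) := by
  rw [sum_cube2_e2_mul_conj haA hbB] at h
  simp only [← sub_ne_zero (a := l.1), ← sub_ne_zero (a := l.2)]
  rcases mul_eq_zero.1 h with h | h
  · exact .inl (mem_torsionBy_of_geom_sum_stdAddChar_eq_zero ha h)
  · exact .inr (mem_torsionBy_of_geom_sum_stdAddChar_eq_zero hb h)

end Cube

theorem dvd_and_dvd_of_div_gcd_mul_le {A B a b : ℕ} (hA : 0 < A) (hB : 0 < B) (ha : 0 < a)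
    (hb : 0 < b) (h : A / A.gcd a * (B / B.gcd b) * (a * b) ≤ A * B) : a ∣ A ∧ b ∣ B := by
  have hqA : 0 < A / A.gcd a := Nat.div_pos (Nat.gcd_le_left a hA) (Nat.gcd_pos_of_pos_left a hA)
  have hqB : 0 < B / B.gcd b := Nat.div_pos (Nat.gcd_le_left b hB) (Nat.gcd_pos_of_pos_left b hB)
  have hgab : a * b ≤ A.gcd a * B.gcd b := by
    conv_rhs at h => rw [← Nat.div_mul_cancel (Nat.gcd_dvd_left A a),
      ← Nat.div_mul_cancel (Nat.gcd_dvd_left B b), mul_mul_mul_comm]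
    exact Nat.le_of_mul_le_mul_left h (Nat.mul_pos hqA hqB)
  have hga := Nat.gcd_le_right A ha
  have hgb := Nat.gcd_le_right B hb
  constructor <;> rw [← Nat.gcd_eq_right_iff_dvd] <;> nlinarith

/-- If the cube `[a]×[b]` has a spectrum `Λ`, then `a ∣ A`, `b ∣ B`, and the dual cube
`[A/a]×[B/b]` tiles `ℤ_A × ℤ_B` with translates `Λ`. -/
theorem spectrum_implies_dual_tiling (A B a b : ℕ) [NeZero A] [NeZero B]
    (ha : 0 < a) (hb : 0 < b) (haA : a ≤ A) (hbB : b ≤ B)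
    (L : Finset (ZMod A × ZMod B)) (hspec : IsSpectrum2 A B (cube2 A B a b) L) :
    a ∣ A ∧ b ∣ B ∧ Tiles (cube2 A B (A / a) (B / b)) L := by
  have hinj : Set.InjOn (fun p : (ZMod A × ZMod B) × (ZMod A × ZMod B) => p.1 + p.2)
      ↑(cube2 A B (A / A.gcd a) (B / B.gcd b) ×ˢ L) := by
    rw [cube2_eq_product]
    exact injOn_add_of_sub_mem _ _ (fun x hx y hy => eq_of_sub_mem_torsionBy hx hy)
      (fun x hx y hy => eq_of_sub_mem_torsionBy hx hy) fun l hl m hm hlm =>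
        sub_mem_torsionBy_of_sum_cube2_e2_mul_conj_eq_zero ha hb haA hbB (hspec.2 l hl m hm hlm)
  have hcardL : L.card = a * b := hspec.1.trans (card_cube2 haA hbB)
  have hpack := card_mul_card_le_of_injOn_add hinj
  rw [card_cube2 (Nat.div_le_self A _) (Nat.div_le_self B _), hcardL, Fintype.card_prod,
    ZMod.card, ZMod.card] at hpack
  obtain ⟨hdvdA, hdvdB⟩ := dvd_and_dvd_of_div_gcd_mul_le (Nat.pos_of_neZero A)
    (Nat.pos_of_neZero B) ha hb hpack
  rw [Nat.gcd_eq_right hdvdA, Nat.gcd_eq_right hdvdB] at hinj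
  refine ⟨hdvdA, hdvdB, tiles_of_injOn_add hinj ?_⟩
  rw [card_cube2 (Nat.div_le_self A _) (Nat.div_le_self B _), hcardL, Fintype.card_prod,
    ZMod.card, ZMod.card, mul_mul_mul_comm, Nat.div_mul_cancel hdvdA, Nat.div_mul_cancel hdvdB]
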